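/- Let n ≥ 1 be an integer and let t be a complex number with |t| = 1 and t^{2n} ≠ 1. Then (2n-1) t^{2n} - 2n t^{2n-1} + 1 ≠ 0. -/

import Mathlib

/-! Rewritten as `(2n-1) t^{2n} + 1 = 2n t^{2n-1}`, the right side has norm `2n`, so the triangle
inequality on the left is an equality; by strict convexity of `ℂ` this forces `t^{2n} = 1`. -/

theorem eq_of_norm_smul_add_eq_add_one {E : Type*} [NormedAddCommGroup E] [NormedSpace ℝ E]
    [StrictConvexSpace ℝ E] {x y : E} (hx : ‖x‖ = 1) (hy : ‖y‖ = 1) {a : ℝ} (ha : 0 < a)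
    (h : ‖a • x + y‖ = a + 1) : x = y := by
  have hray : SameRay ℝ (a • x) y := by
    rw [sameRay_iff_norm_add, h, hy, norm_smul, hx, Real.norm_of_nonneg ha.le, mul_one]
  have hxy : SameRay ℝ x y := by
    simpa [ha.ne'] using hray.pos_smul_left (inv_pos.2 ha)
  exact hxy.eq_of_norm_eq (hx.trans hy.symm)

/-- If `|t| = 1` and `t^{2n} ≠ 1` then `(2n-1) t^{2n} - 2n t^{2n-1} + 1 ≠ 0`. -/
theorem kernel_factor_ne_zero (n : ℕ) (hn : 1 ≤ n) (t : ℂ) (ht : ‖t‖ = 1)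
    (ht' : t ^ (2 * n) ≠ 1) :
    ((2 * n : ℂ) - 1) * t ^ (2 * n) - (2 * n : ℂ) * t ^ (2 * n - 1) + 1 ≠ 0 := by
  intro h
  have hnorm_pow (k : ℕ) : ‖t ^ k‖ = 1 := by rw [norm_pow, ht, one_pow]
  have ha : (0 : ℝ) < 2 * n - 1 := by
    have : (1 : ℝ) ≤ n := by exact_mod_cast hn
    linarith
  have hbalance : ((2 * n - 1 : ℝ) : ℂ) * t ^ (2 * n) + 1 = (2 * n : ℝ) * t ^ (2 * n - 1) := by
    push_cast
    linear_combination h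
  refine ht' (eq_of_norm_smul_add_eq_add_one (hnorm_pow _) norm_one ha ?_)
  rw [Complex.real_smul, hbalance, norm_mul, hnorm_pow, Complex.norm_real,
    Real.norm_of_nonneg (by positivity)]
  ring
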